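/- Let a, b, c be the tree automorphisms of the binary tree defined by the wreath recursions a = σ(c,c), b = σ(a,a), c = (b,a) (automaton number 2277). Then a, b, c each have order 2, the subgroup H generated by x = cb and y = ab is free abelian of rank 2, H is a normal subgroup of index 2 in the group G₂₂₇₇ generated by a, b, c, and conjugation by b inverts both x and y; consequently G₂₂₇₇ ≅ C₂ ⋉ (ℤ × ℤ) where C₂ acts by inversion. -/

import Mathlib

/-- An invertible automaton over the two-letter alphabet `Bool`:
a set of states `Q`, a transition map and an output map such that each state
acts on the alphabet by a permutation. -/
structure BinAutomaton (Q : Type*) where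
  trans : Q → Bool → Q
  out : Q → Bool → Bool
  out_bij : ∀ q, Function.Bijective (out q)

namespace BinAutomaton

variable {Q : Type*} (A : BinAutomaton Q)

/-- The action of a state on finite binary words:
`q(xw) = ρ(q,x) · (τ(q,x))(w)`. -/
def act : Q → List Bool → List Bool
  | _, [] => []
  | q, x :: w => A.out q x :: act (A.trans q x) w

theorem act_injective (q : Q) : Function.Injective (A.act q) := by
  intro u
  induction u generalizing q with
  | nil =>
    intro v h
    cases v with
    | nil => rfl
    | cons y v => simp [act] at h
  | cons x u ih =>
    intro v h
    cases v with
    | nil => simp [act] at h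
    | cons y v =>
      simp only [act, List.cons.injEq] at h
      obtain ⟨h1, h2⟩ := h
      obtain rfl : x = y := (A.out_bij q).1 h1
      rw [ih _ h2]

theorem act_surjective (q : Q) : Function.Surjective (A.act q) := by
  intro v
  induction v generalizing q with
  | nil => exact ⟨[], rfl⟩
  | cons y v ih =>
    obtain ⟨x, hx⟩ := (A.out_bij q).2 y
    obtain ⟨w, hw⟩ := ih (A.trans q x)
    exact ⟨x :: w, by simp [act, hx, hw]⟩

/-- The tree automorphism defined by the state `q`. -/
noncomputable def perm (q : Q) : Equiv.Perm (List Bool) :=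
  Equiv.ofBijective (A.act q) ⟨A.act_injective q, A.act_surjective q⟩

/-- The group generated by the automaton: the subgroup of the group of
bijections of the binary tree generated by the states. -/
noncomputable def autGroup : Subgroup (Equiv.Perm (List Bool)) :=
  Subgroup.closure (Set.range A.perm)

end BinAutomaton

/-- Helper constructing a 3-state automaton from the sections at `0`, the
sections at `1`, and the activity of each state. -/
def mkAut3 (t0 t1 : Fin 3 → Fin 3) (actv : Fin 3 → Bool) : BinAutomaton (Fin 3) where
  trans q x := cond x (t1 q) (t0 q)
  out q x := xor (actv q) x
  out_bij q := by
    have h : ∀ b : Bool, Function.Bijective fun x => xor b x := by decide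
    exact h (actv q)

/-- The action of `C₂` on `ℤ × ℤ` (written multiplicatively) by inversion. -/
def invAction : Multiplicative (ZMod 2) →* MulAut (Multiplicative ℤ × Multiplicative ℤ) :=
  MonoidHom.mk'
    (fun g => (MulEquiv.inv (Multiplicative ℤ × Multiplicative ℤ)) ^ g.toAdd.val)
    (by
      intro x y
      have hsq' : (MulEquiv.inv (Multiplicative ℤ × Multiplicative ℤ)) *
          (MulEquiv.inv (Multiplicative ℤ × Multiplicative ℤ)) = 1 := by
        ext z <;> simp [MulAut.mul_apply, MulAut.one_apply]
      have hsq : (MulEquiv.inv (Multiplicative ℤ × Multiplicative ℤ)) ^ 2 = 1 := by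
        rw [pow_two]; exact hsq'
      show _ ^ ((x.toAdd + y.toAdd).val) = _
      rw [ZMod.val_add, ← pow_eq_pow_mod _ hsq, pow_add])

/-- The semidirect product `C₂ ⋉ (ℤ × ℤ)` where `C₂` acts by inverting both
coordinates. -/
abbrev C2LtimesZ2 : Type :=
  SemidirectProduct (Multiplicative ℤ × Multiplicative ℤ)
    (Multiplicative (ZMod 2)) invAction

/-- Automaton number 2277:
`a = σ(c,c)`, `b = σ(a,a)`, `c = (b,a)` (states `0 = a`, `1 = b`, `2 = c`). -/
def A2277 : BinAutomaton (Fin 3) :=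
  mkAut3 ![2, 0, 1] ![2, 0, 0] ![true, true, false]

noncomputable def a : Equiv.Perm (List Bool) := A2277.perm 0
noncomputable def b : Equiv.Perm (List Bool) := A2277.perm 1
noncomputable def c : Equiv.Perm (List Bool) := A2277.perm 2

/-!
The wreath recursions make `a`, `b`, `c` involutions and give, for `x = cb`, `y = ab` and
`z = ca`, the recursions `x = σ(1, y⁻¹)`, `y = (z, z)`, `z = σ(z⁻¹, x⁻¹)`; a bisimulation on
three pairs of automorphisms then shows `yz = x`, so `x` and `y` commute.

Since `x² = (y⁻¹, y⁻¹)`, one gets `x^{2k} yⁿ = (xⁿ y^{-k-n}, xⁿ y^{-k-n})`, while `x^{2k+1} yⁿ`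
swaps the root. A relation `x^m yⁿ = 1` therefore forces `m = 2k` and produces the relation
`xⁿ y^{-k-n} = 1`, and this step halves the positive definite form `(m + n)² + n²`; by descent
only the trivial relation exists. Conjugation by `b` inverts `x` and `y`, and `b ∉ ⟨x, y⟩`,
so `(p, ε) ↦ x^{p₁} y^{p₂} b^ε` is an isomorphism `C₂ ⋉ ℤ² ≅ G₂₂₇₇` carrying `ℤ²` onto
`⟨x, y⟩`, which consequently has index 2.
-/

open Equiv

section TreeRecursion

def treeFix (g₀ g₁ : Perm (List Bool)) : Perm (List Bool) where
  toFun
    | [] => []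
    | false :: w => false :: g₀ w
    | true :: w => true :: g₁ w
  invFun
    | [] => []
    | false :: w => false :: g₀⁻¹ w
    | true :: w => true :: g₁⁻¹ w
  left_inv
    | [] => rfl
    | false :: w => by simp
    | true :: w => by simp
  right_inv
    | [] => rfl
    | false :: w => by simp
    | true :: w => by simp

def treeSwap (g₀ g₁ : Perm (List Bool)) : Perm (List Bool) where
  toFun
    | [] => []
    | false :: w => true :: g₀ w
    | true :: w => false :: g₁ w
  invFun
    | [] => []
    | false :: w => true :: g₁⁻¹ w
    | true :: w => false :: g₀⁻¹ w
  left_inv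
    | [] => rfl
    | false :: w => by simp
    | true :: w => by simp
  right_inv
    | [] => rfl
    | false :: w => by simp
    | true :: w => by simp

variable (g₀ g₁ h₀ h₁ : Perm (List Bool))

@[simp] lemma treeFix_nil : treeFix g₀ g₁ [] = [] := rfl
@[simp] lemma treeFix_false_cons (w : List Bool) :
    treeFix g₀ g₁ (false :: w) = false :: g₀ w := rfl
@[simp] lemma treeFix_true_cons (w : List Bool) :
    treeFix g₀ g₁ (true :: w) = true :: g₁ w := rfl
@[simp] lemma treeSwap_nil : treeSwap g₀ g₁ [] = [] := rfl
@[simp] lemma treeSwap_false_cons (w : List Bool) :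
    treeSwap g₀ g₁ (false :: w) = true :: g₀ w := rfl
@[simp] lemma treeSwap_true_cons (w : List Bool) :
    treeSwap g₀ g₁ (true :: w) = false :: g₁ w := rfl

lemma treeFix_mul_treeFix : treeFix g₀ g₁ * treeFix h₀ h₁ =
    treeFix (g₀ * h₀) (g₁ * h₁) := by
  ext (_ | ⟨_ | _, w⟩) <;> rfl

lemma treeFix_mul_treeSwap : treeFix g₀ g₁ * treeSwap h₀ h₁ =
    treeSwap (g₁ * h₀) (g₀ * h₁) := by
  ext (_ | ⟨_ | _, w⟩) <;> rfl

lemma treeSwap_mul_treeFix : treeSwap g₀ g₁ * treeFix h₀ h₁ =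
    treeSwap (g₀ * h₀) (g₁ * h₁) := by
  ext (_ | ⟨_ | _, w⟩) <;> rfl

lemma treeSwap_mul_treeSwap : treeSwap g₀ g₁ * treeSwap h₀ h₁ =
    treeFix (g₁ * h₀) (g₀ * h₁) := by
  ext (_ | ⟨_ | _, w⟩) <;> rfl

@[simp] lemma treeFix_one : treeFix 1 1 = 1 := by
  ext (_ | ⟨_ | _, w⟩) <;> rfl

lemma treeFix_inv : (treeFix g₀ g₁)⁻¹ = treeFix g₀⁻¹ g₁⁻¹ :=
  inv_eq_of_mul_eq_one_right (by simp [treeFix_mul_treeFix])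

lemma treeSwap_inv : (treeSwap g₀ g₁)⁻¹ = treeSwap g₁⁻¹ g₀⁻¹ :=
  inv_eq_of_mul_eq_one_right (by simp [treeSwap_mul_treeSwap])

lemma treeFix_eq_one_iff : treeFix g₀ g₁ = 1 ↔ g₀ = 1 ∧ g₁ = 1 := by
  refine ⟨fun h => ⟨Equiv.ext fun w => ?_, Equiv.ext fun w => ?_⟩, ?_⟩
  · simpa using congr($h (false :: w))
  · simpa using congr($h (true :: w))
  · rintro ⟨rfl, rfl⟩
    exact treeFix_one

lemma treeSwap_ne_one : treeSwap g₀ g₁ ≠ 1 := fun h => by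
  simpa using congr($h [false])

def treeFixHom : Perm (List Bool) × Perm (List Bool) →* Perm (List Bool) where
  toFun p := treeFix p.1 p.2
  map_one' := treeFix_one
  map_mul' _ _ := (treeFix_mul_treeFix ..).symm

lemma treeFix_zpow (k : ℤ) : treeFix g₀ g₁ ^ k = treeFix (g₀ ^ k) (g₁ ^ k) :=
  (map_zpow treeFixHom (g₀, g₁) k).symm

def IsTreeBisimulation (R : Perm (List Bool) → Perm (List Bool) → Prop) : Prop :=
  ∀ f g, R f g → f = g ∨ ∃ f₀ f₁ g₀ g₁,
    (f = treeFix f₀ f₁ ∧ g = treeFix g₀ g₁ ∨ f = treeSwap f₀ f₁ ∧ g = treeSwap g₀ g₁) ∧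
      R f₀ g₀ ∧ R f₁ g₁

theorem IsTreeBisimulation.eq {R : Perm (List Bool) → Perm (List Bool) → Prop}
    (hR : IsTreeBisimulation R) {f g : Perm (List Bool)} (hfg : R f g) : f = g := by
  refine Equiv.ext fun w => ?_
  induction w generalizing f g with
  | nil =>
    obtain rfl | ⟨_, _, _, _, ⟨rfl, rfl⟩ | ⟨rfl, rfl⟩, -⟩ := hR f g hfg <;> rfl
  | cons v w ih =>
    obtain rfl | ⟨_, _, _, _, ⟨rfl, rfl⟩ | ⟨rfl, rfl⟩, h₀, h₁⟩ := hR f g hfg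
    · rfl
    all_goals cases v <;> simp [ih h₀, ih h₁]

end TreeRecursion

namespace BinAutomaton

variable {Q : Type*} (A : BinAutomaton Q) (q : Q)

@[simp] lemma perm_apply (w : List Bool) : A.perm q w = A.act q w := rfl

theorem perm_eq_treeFix (h : ∀ v, A.out q v = v) :
    A.perm q = treeFix (A.perm (A.trans q false)) (A.perm (A.trans q true)) := by
  refine Equiv.ext fun w => ?_
  rcases w with _ | ⟨_ | _, w⟩ <;> simp [act, h]

theorem perm_eq_treeSwap (h : ∀ v, A.out q v = !v) :
    A.perm q = treeSwap (A.perm (A.trans q false)) (A.perm (A.trans q true)) := by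
  refine Equiv.ext fun w => ?_
  rcases w with _ | ⟨_ | _, w⟩ <;> simp [act, h]

end BinAutomaton

section GroupTheory

def zmodPowHom {G : Type*} [Group G] {n : ℕ} [NeZero n] (g : G) (hg : g ^ n = 1) :
    Multiplicative (ZMod n) →* G :=
  MonoidHom.mk' (fun k => g ^ k.toAdd.val) fun k l => by
    rw [toAdd_mul, ZMod.val_add, ← pow_eq_pow_mod _ hg, pow_add]

theorem MonoidHom.comp_toMonoidHom_pow {N H : Type*} [Group N] [Group H] (f : N →* H)
    {σ : MulAut N} {τ : MulAut H} (h : f.comp σ.toMonoidHom = τ.toMonoidHom.comp f) (k : ℕ) :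
    f.comp (σ ^ k).toMonoidHom = (τ ^ k).toMonoidHom.comp f := by
  induction k with
  | zero => ext; simp
  | succ k ih =>
    ext p
    simpa [pow_succ, MulAut.mul_apply] using
      (DFunLike.congr_fun ih (σ p)).trans (congrArg (τ ^ k) (DFunLike.congr_fun h p))

namespace SemidirectProduct

variable {N G H : Type*} [Group N] [Group G] [Group H] {φ : G →* MulAut N}
  {fn : N →* H} {fg : G →* H}
  {h : ∀ g, fn.comp (φ g).toMonoidHom = (MulAut.conj (fg g)).toMonoidHom.comp fn}

theorem range_lift : (lift fn fg h).range = fn.range ⊔ fg.range := by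
  refine le_antisymm ?_ (sup_le ?_ ?_)
  · rintro _ ⟨⟨n, g⟩, rfl⟩
    exact mul_mem (Subgroup.mem_sup_left ⟨n, rfl⟩) (Subgroup.mem_sup_right ⟨g, rfl⟩)
  · rintro _ ⟨n, rfl⟩
    exact ⟨inl n, lift_inl ..⟩
  · rintro _ ⟨g, rfl⟩
    exact ⟨inr g, lift_inr ..⟩

theorem lift_injective (hn : Function.Injective fn) (hg : Function.Injective fg)
    (hdisj : Disjoint fn.range fg.range) : Function.Injective (lift fn fg h) := by
  refine (injective_iff_map_eq_one _).2 fun ⟨n, g⟩ hng => ?_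
  have hfg : fg g = fn n⁻¹ := by
    rw [map_inv]
    exact eq_inv_of_mul_eq_one_right hng
  have hg1 : g = 1 :=
    (map_eq_one_iff fg hg).1 (Subgroup.disjoint_def.1 hdisj ⟨n⁻¹, hfg.symm⟩ ⟨g, rfl⟩)
  have hn1 : n = 1 := by
    rw [hg1, map_one, eq_comm, map_inv, inv_eq_one, map_eq_one_iff fn hn] at hfg
    exact hfg
  ext <;> simp [hn1, hg1]

theorem index_range_inl : (inl : N →* N ⋊[φ] G).range.index = Nat.card G := by
  rw [range_inl_eq_ker_rightHom, Subgroup.index_ker,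
    MonoidHom.range_eq_top_of_surjective _ rightHom_surjective, Subgroup.card_top]

end SemidirectProduct

end GroupTheory

namespace Automaton2277

lemma a_eq_treeSwap : a = treeSwap c c := A2277.perm_eq_treeSwap 0 (by decide)
lemma b_eq_treeSwap : b = treeSwap a a := A2277.perm_eq_treeSwap 1 (by decide)
lemma c_eq_treeFix : c = treeFix b a := A2277.perm_eq_treeFix 2 (by decide)

theorem generators_mul_self : a * a = 1 ∧ b * b = 1 ∧ c * c = 1 := by
  let R : Perm (List Bool) → Perm (List Bool) → Prop :=
    fun f g => f = g ∨ g = 1 ∧ (f = a * a ∨ f = b * b ∨ f = c * c)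
  have hR : IsTreeBisimulation R := by
    have one_eq : (1 : Perm (List Bool)) = treeFix 1 1 := treeFix_one.symm
    rintro f g (rfl | ⟨rfl, rfl | rfl | rfl⟩)
    · exact .inl rfl
    · refine .inr ⟨c * c, c * c, 1, 1, .inl ⟨?_, one_eq⟩, .inr ⟨rfl, .inr (.inr rfl)⟩,
        .inr ⟨rfl, .inr (.inr rfl)⟩⟩
      rw [a_eq_treeSwap, treeSwap_mul_treeSwap]
    · refine .inr ⟨a * a, a * a, 1, 1, .inl ⟨?_, one_eq⟩, .inr ⟨rfl, .inl rfl⟩,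
        .inr ⟨rfl, .inl rfl⟩⟩
      rw [b_eq_treeSwap, treeSwap_mul_treeSwap]
    · refine .inr ⟨b * b, a * a, 1, 1, .inl ⟨?_, one_eq⟩, .inr ⟨rfl, .inr (.inl rfl)⟩,
        .inr ⟨rfl, .inl rfl⟩⟩
      rw [c_eq_treeFix, treeFix_mul_treeFix]
  exact ⟨hR.eq (.inr ⟨rfl, .inl rfl⟩), hR.eq (.inr ⟨rfl, .inr (.inl rfl)⟩),
    hR.eq (.inr ⟨rfl, .inr (.inr rfl)⟩)⟩

lemma a_mul_self : a * a = 1 := generators_mul_self.1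
lemma b_mul_self : b * b = 1 := generators_mul_self.2.1
lemma c_mul_self : c * c = 1 := generators_mul_self.2.2

lemma a_inv : a⁻¹ = a := inv_eq_of_mul_eq_one_right a_mul_self
lemma b_inv : b⁻¹ = b := inv_eq_of_mul_eq_one_right b_mul_self
lemma c_inv : c⁻¹ = c := inv_eq_of_mul_eq_one_right c_mul_self

lemma a_ne_one : a ≠ 1 := by
  rw [a_eq_treeSwap]
  exact treeSwap_ne_one c c

lemma b_ne_one : b ≠ 1 := by
  rw [b_eq_treeSwap]
  exact treeSwap_ne_one a a

lemma c_ne_one : c ≠ 1 := by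
  rw [c_eq_treeFix, Ne, treeFix_eq_one_iff]
  exact fun h => b_ne_one h.1

lemma orderOf_a : orderOf a = 2 := orderOf_eq_prime (by rw [sq, a_mul_self]) a_ne_one
lemma orderOf_b : orderOf b = 2 := orderOf_eq_prime (by rw [sq, b_mul_self]) b_ne_one
lemma orderOf_c : orderOf c = 2 := orderOf_eq_prime (by rw [sq, c_mul_self]) c_ne_one

noncomputable def x : Perm (List Bool) := c * b
noncomputable def y : Perm (List Bool) := a * b
noncomputable def z : Perm (List Bool) := c * a

lemma x_inv : x⁻¹ = b * c := by rw [x, mul_inv_rev, b_inv, c_inv]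
lemma y_inv : y⁻¹ = b * a := by rw [y, mul_inv_rev, b_inv, a_inv]
lemma z_inv : z⁻¹ = a * c := by rw [z, mul_inv_rev, a_inv, c_inv]

lemma x_eq_treeSwap : x = treeSwap 1 y⁻¹ := by
  rw [x, y_inv, congr($c_eq_treeFix * $b_eq_treeSwap), treeFix_mul_treeSwap, a_mul_self]

lemma y_eq_treeFix : y = treeFix z z :=
  congr($a_eq_treeSwap * $b_eq_treeSwap).trans (treeSwap_mul_treeSwap ..)

lemma z_eq_treeSwap : z = treeSwap z⁻¹ x⁻¹ := by
  rw [z_inv, x_inv]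
  exact congr($c_eq_treeFix * $a_eq_treeSwap).trans (treeFix_mul_treeSwap ..)

lemma z_mul_y : z * y = x := by
  rw [z, y, x, mul_assoc, ← mul_assoc a, a_mul_self, one_mul]

lemma x_mul_y_inv : x * y⁻¹ = z := by
  rw [x, y_inv, z, mul_assoc, ← mul_assoc b, b_mul_self, one_mul]

lemma y_mul_z : y * z = x := by
  have hx : x⁻¹ = treeSwap y 1 := by rw [x_eq_treeSwap, treeSwap_inv, inv_inv, inv_one]
  have hy : y⁻¹ = treeFix z⁻¹ z⁻¹ := by rw [y_eq_treeFix, treeFix_inv]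
  have hz : z⁻¹ = treeSwap x z :=
    congr($z_eq_treeSwap⁻¹).trans (by rw [treeSwap_inv, inv_inv, inv_inv])
  have hyz : y * z = treeSwap 1 (z * x⁻¹) := by
    rw [congr($y_eq_treeFix * $z_eq_treeSwap), treeFix_mul_treeSwap, mul_inv_cancel]
  have hzx : z * x⁻¹ = treeFix (x⁻¹ * y) z⁻¹ := by
    rw [congr($z_eq_treeSwap * $hx), treeSwap_mul_treeSwap, mul_one]
  have hxy : x⁻¹ * y = treeSwap (y * z) z := by
    rw [congr($hx * $y_eq_treeFix), treeSwap_mul_treeFix, one_mul]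
  let R : Perm (List Bool) → Perm (List Bool) → Prop := fun f g =>
    f = g ∨ f = y * z ∧ g = x ∨ f = z * x⁻¹ ∧ g = y⁻¹ ∨ f = x⁻¹ * y ∧ g = z⁻¹
  have hR : IsTreeBisimulation R := by
    rintro f g (rfl | ⟨rfl, rfl⟩ | ⟨rfl, rfl⟩ | ⟨rfl, rfl⟩)
    · exact .inl rfl
    · exact .inr ⟨_, _, _, _, .inr ⟨hyz, x_eq_treeSwap⟩, .inl rfl, .inr (.inr (.inl ⟨rfl, rfl⟩))⟩
    · exact .inr ⟨_, _, _, _, .inl ⟨hzx, hy⟩, .inr (.inr (.inr ⟨rfl, rfl⟩)), .inl rfl⟩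
    · exact .inr ⟨_, _, _, _, .inr ⟨hxy, hz⟩, .inr (.inl ⟨rfl, rfl⟩), .inl rfl⟩
  exact hR.eq (.inr (.inl ⟨rfl, rfl⟩))

theorem commute_x_y : Commute x y :=
  calc x * y = y * z * y := by rw [y_mul_z]
    _ = y * x := by rw [mul_assoc, z_mul_y]

lemma x_zpow_two_mul_mul_y_zpow (k n : ℤ) :
    x ^ (2 * k) * y ^ n = treeFix (x ^ n * y ^ (-k - n)) (x ^ n * y ^ (-k - n)) := by
  have hx2 : x ^ (2 : ℤ) = treeFix y⁻¹ y⁻¹ := by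
    rw [zpow_two, x_eq_treeSwap, treeSwap_mul_treeSwap, mul_one, one_mul]
  have hsection : y⁻¹ ^ k * z ^ n = x ^ n * y ^ (-k - n) := by
    rw [← x_mul_y_inv, commute_x_y.inv_right.mul_zpow, inv_zpow', inv_zpow', ← mul_assoc,
      (commute_x_y.zpow_zpow n (-k)).symm.eq, mul_assoc, ← zpow_add, ← sub_eq_add_neg]
  rw [zpow_mul, hx2, treeFix_zpow, congr($y_eq_treeFix ^ n), treeFix_zpow, treeFix_mul_treeFix,
    hsection]

lemma exists_eq_two_mul_of_x_zpow_mul_y_zpow_eq_one {m n : ℤ} (h : x ^ m * y ^ n = 1) :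
    ∃ k, m = 2 * k ∧ x ^ n * y ^ (-k - n) = 1 := by
  obtain ⟨k, rfl | rfl⟩ := Int.even_or_odd' m
  · rw [x_zpow_two_mul_mul_y_zpow, treeFix_eq_one_iff] at h
    exact ⟨k, rfl, h.1⟩
  · rw [zpow_add_one, mul_assoc, (commute_x_y.zpow_right n).eq, ← mul_assoc,
      x_zpow_two_mul_mul_y_zpow, x_eq_treeSwap, treeFix_mul_treeSwap] at h
    exact (treeSwap_ne_one _ _ h).elim

theorem eq_zero_of_x_zpow_mul_y_zpow_eq_one {m n : ℤ} (h : x ^ m * y ^ n = 1) :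
    m = 0 ∧ n = 0 := by
  induction hN : ((m + n) ^ 2 + n ^ 2).toNat using Nat.strong_induction_on generalizing m n with
  | _ N ih =>
  obtain ⟨k, rfl, h'⟩ := exists_eq_two_mul_of_x_zpow_mul_y_zpow_eq_one h
  have hhalf : (2 * k + n) ^ 2 + n ^ 2 = 2 * ((n + (-k - n)) ^ 2 + (-k - n) ^ 2) := by ring
  have hpos : 0 ≤ (n + (-k - n)) ^ 2 + (-k - n) ^ 2 := by positivity
  by_cases h0 : (2 * k + n) ^ 2 + n ^ 2 = 0
  · constructor <;> nlinarith [sq_nonneg (2 * k + n), sq_nonneg n]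
  · obtain ⟨hn, hk⟩ := ih _ (by omega) h' rfl
    omega

-- Without the `show`s below, the proof arguments are stored at their unfolded types and
-- `rw` with `noncommCoprod_range`, `range_lift` no longer matches `xyHom`, `liftHom`.
noncomputable def xyHom : Multiplicative ℤ × Multiplicative ℤ →* Perm (List Bool) :=
  (zpowersHom _ x).noncommCoprod (zpowersHom _ y) fun _ _ =>
    show Commute (zpowersHom _ x _) (zpowersHom _ y _) from commute_x_y.zpow_zpow _ _

lemma xyHom_apply (m n : Multiplicative ℤ) : xyHom (m, n) = x ^ m.toAdd * y ^ n.toAdd := rfl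

lemma xyHom_injective : Function.Injective xyHom :=
  (injective_iff_map_eq_one _).2 fun ⟨m, n⟩ h => by
    obtain ⟨hm, hn⟩ := eq_zero_of_x_zpow_mul_y_zpow_eq_one h
    exact Prod.ext (toAdd_eq_zero.1 hm) (toAdd_eq_zero.1 hn)

lemma range_xyHom : xyHom.range = Subgroup.closure {x, y} := by
  rw [xyHom, MonoidHom.noncommCoprod_range, Subgroup.range_zpowersHom,
    Subgroup.range_zpowersHom, Set.insert_eq,
    Subgroup.closure_union, Subgroup.zpowers_eq_closure, Subgroup.zpowers_eq_closure]

lemma b_mul_x_mul_b_inv : b * x * b⁻¹ = x⁻¹ := by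
  simp only [x, b_inv, c_inv, mul_inv_rev, mul_assoc, b_mul_self, mul_one]

lemma b_mul_y_mul_b_inv : b * y * b⁻¹ = y⁻¹ := by
  simp only [y, b_inv, a_inv, mul_inv_rev, mul_assoc, b_mul_self, mul_one]

lemma xyHom_comp_inv : xyHom.comp (MulEquiv.inv _).toMonoidHom =
    (MulAut.conj b).toMonoidHom.comp xyHom := by
  refine MonoidHom.ext fun ⟨m, n⟩ => ?_
  calc xyHom (m⁻¹, n⁻¹) = x⁻¹ ^ m.toAdd * y⁻¹ ^ n.toAdd := by
        rw [xyHom_apply, toAdd_inv, toAdd_inv, zpow_neg, zpow_neg, inv_zpow, inv_zpow]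
    _ = MulAut.conj b (xyHom (m, n)) := by
        rw [xyHom_apply, map_mul, map_zpow, map_zpow, MulAut.conj_apply, MulAut.conj_apply,
          b_mul_x_mul_b_inv, b_mul_y_mul_b_inv]

lemma b_notMem_range_xyHom : b ∉ xyHom.range := by
  rintro ⟨p, hp⟩
  have hp2 : xyHom (p ^ 2) = 1 := by rw [map_pow, hp, sq, b_mul_self]
  have hp1 : p = 1 :=
    (pow_eq_one_iff.1 ((map_eq_one_iff _ xyHom_injective).1 hp2)).resolve_right two_ne_zero
  rw [hp1, map_one] at hp
  exact b_ne_one hp.symm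

noncomputable def bHom : Multiplicative (ZMod 2) →* Perm (List Bool) :=
  zmodPowHom b (by rw [sq, b_mul_self])

lemma bHom_ofAdd_one : bHom (Multiplicative.ofAdd 1) = b := pow_one b

lemma eq_one_or_eq_ofAdd_one (g : Multiplicative (ZMod 2)) :
    g = 1 ∨ g = Multiplicative.ofAdd 1 := by
  revert g
  decide

noncomputable def liftHom : C2LtimesZ2 →* Perm (List Bool) :=
  SemidirectProduct.lift xyHom bHom fun g =>
    show xyHom.comp (invAction g).toMonoidHom = _ from
    (xyHom.comp_toMonoidHom_pow xyHom_comp_inv g.toAdd.val).trans (by rw [← map_pow]; rfl)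

lemma liftHom_injective : Function.Injective liftHom := by
  refine SemidirectProduct.lift_injective xyHom_injective ?_ ?_
  · refine (injective_iff_map_eq_one _).2 fun g hg => ?_
    obtain rfl | rfl := eq_one_or_eq_ofAdd_one g
    · rfl
    · exact absurd (bHom_ofAdd_one ▸ hg) b_ne_one
  · refine Subgroup.disjoint_def.2 fun {_} hxy ⟨g, hg⟩ => ?_
    obtain rfl | rfl := eq_one_or_eq_ofAdd_one g
    · exact hg.symm.trans (map_one bHom)
    · exact absurd (hg.symm.trans bHom_ofAdd_one ▸ hxy) b_notMem_range_xyHom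

lemma range_liftHom : liftHom.range = Subgroup.closure {a, b, c} := by
  have ha : a ∈ Subgroup.closure {a, b, c} := Subgroup.subset_closure (by simp)
  have hb : b ∈ Subgroup.closure {a, b, c} := Subgroup.subset_closure (by simp)
  have hc : c ∈ Subgroup.closure {a, b, c} := Subgroup.subset_closure (by simp)
  have hx : x ∈ xyHom.range := range_xyHom ▸ Subgroup.subset_closure (by simp)
  have hy : y ∈ xyHom.range := range_xyHom ▸ Subgroup.subset_closure (by simp)
  have hb' : b ∈ bHom.range := ⟨Multiplicative.ofAdd 1, bHom_ofAdd_one⟩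
  rw [liftHom, SemidirectProduct.range_lift]
  refine le_antisymm (sup_le ?_ ?_) ((Subgroup.closure_le _).2 ?_)
  · rw [range_xyHom, Subgroup.closure_le]
    rintro _ (rfl | rfl)
    exacts [mul_mem hc hb, mul_mem ha hb]
  · rintro _ ⟨g, rfl⟩
    exact pow_mem hb _
  · rintro _ (rfl | rfl | rfl)
    · rw [← mul_one a, ← b_mul_self, ← mul_assoc]
      exact mul_mem (Subgroup.mem_sup_left hy) (Subgroup.mem_sup_right hb')
    · exact Subgroup.mem_sup_right hb'
    · rw [← mul_one c, ← b_mul_self, ← mul_assoc]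
      exact mul_mem (Subgroup.mem_sup_left hx) (Subgroup.mem_sup_right hb')

lemma liftHom_comp_inl : liftHom.comp SemidirectProduct.inl = xyHom :=
  SemidirectProduct.lift_comp_inl ..

lemma range_xyHom_le_range_liftHom : xyHom.range ≤ liftHom.range := by
  rw [← liftHom_comp_inl, MonoidHom.range_comp]
  exact Subgroup.map_le_range _ _

lemma relIndex_range_xyHom : xyHom.range.relIndex liftHom.range = 2 := by
  rw [← liftHom_comp_inl, ← MonoidHom.map_range, MonoidHom.range_eq_map liftHom,
    Subgroup.relIndex_map_map_of_injective _ _ liftHom_injective, Subgroup.relIndex_top_right,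
    SemidirectProduct.index_range_inl, Nat.card_eq_fintype_card, Fintype.card_multiplicative,
    ZMod.card]

end Automaton2277

/-- The group `G₂₂₇₇` generated by automaton 2277 is `C₂ ⋉ (ℤ × ℤ)`:
the generators have order 2, the subgroup `H = ⟨cb, ab⟩` is free abelian of
rank 2, normal of index 2 in `G₂₂₇₇`, conjugation by `b` inverts both `cb` and
`ab`, and `G₂₂₇₇` is isomorphic to the semidirect product `C₂ ⋉ (ℤ × ℤ)` with
`C₂` acting by inversion. -/
theorem automaton2277_group_is_C2_ltimes_Z2 :
    orderOf a = 2 ∧ orderOf b = 2 ∧ orderOf c = 2 ∧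
    Commute (c * b) (a * b) ∧
    (∀ m n : ℤ, (c * b) ^ m * (a * b) ^ n = 1 → m = 0 ∧ n = 0) ∧
    Subgroup.closure {c * b, a * b} ≤ Subgroup.closure {a, b, c} ∧
    ((Subgroup.closure {c * b, a * b}).subgroupOf
      (Subgroup.closure {a, b, c})).Normal ∧
    (Subgroup.closure {c * b, a * b}).relIndex (Subgroup.closure {a, b, c}) = 2 ∧
    b * (c * b) * b⁻¹ = (c * b)⁻¹ ∧
    b * (a * b) * b⁻¹ = (a * b)⁻¹ ∧
    Nonempty (↥(Subgroup.closure {a, b, c}) ≃* C2LtimesZ2) := open Automaton2277 in by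
  have hH : Subgroup.closure {c * b, a * b} = xyHom.range := range_xyHom.symm
  have hG : Subgroup.closure {a, b, c} = liftHom.range := range_liftHom.symm
  have hindex : (Subgroup.closure {c * b, a * b}).relIndex (Subgroup.closure {a, b, c}) = 2 := by
    rw [hH, hG]
    exact relIndex_range_xyHom
  exact ⟨orderOf_a, orderOf_b, orderOf_c, commute_x_y,
    fun _ _ => eq_zero_of_x_zpow_mul_y_zpow_eq_one, hH ▸ hG ▸ range_xyHom_le_range_liftHom,
    Subgroup.normal_of_index_eq_two hindex, hindex, b_mul_x_mul_b_inv, b_mul_y_mul_b_inv,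
    ⟨(MulEquiv.subgroupCongr hG).trans (MonoidHom.ofInjective liftHom_injective).symm⟩⟩
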